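/- Let 0 < α ≤ 1 and β > 0, and let φ : ℝⁿ×ℝⁿ → ℝ and L : ℝⁿ×ℝⁿ×[a,b] → ℝ be of class C². Let (u,y), (ν,w) ∈ L^∞([a,b],ℝⁿ)×ℝⁿ, set x(t) := y + ∫_a^t ((t−s)^{α−1}/Γ(α)) u(s) ds, η(t) := w + ∫_a^t ((t−s)^{α−1}/Γ(α)) ν(s) ds, and for h ∈ ℝ let 𝓛(h) := φ(x(a)+hη(a), x(b)+hη(b)) + ∫_a^b ((b−s)^{β−1}/Γ(β)) L( x(s)+hη(s), u(s)+hν(s), s ) ds. Let D := ∂₁φ(x(a),x(b))·η(a) + ∂₂φ(x(a),x(b))·η(b) + ∫_a^b ((b−s)^{β−1}/Γ(β)) [ ∂₁L(x(s),u(s),s)·η(s) + ∂₂L(x(s),u(s),s)·ν(s) ] ds. Then the limit lim_{h→0} ( 𝓛(h) − 𝓛(0) − h D )/(h²/2) exists and equals η(a)ᵀ A η(a) + 2 η(a)ᵀ B η(b) + η(b)ᵀ C η(b) + ∫_a^b ((b−s)^{β−1}/Γ(β)) [ η(s)ᵀ P(s) η(s) + 2 η(s)ᵀ Q(s) ν(s)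 + ν(s)ᵀ R(s) ν(s) ] ds, where A := ∂²₁₁φ(x(a),x(b)), B := ∂²₁₂φ(x(a),x(b)), C := ∂²₂₂φ(x(a),x(b)), P(s) := ∂²₁₁L(x(s),u(s),s), Q(s) := ∂²₁₂L(x(s),u(s),s), R(s) := ∂²₂₂L(x(s),u(s),s). -/

import Mathlib

/-
Along the variation `h ↦ (x + h • η, u + h • ν)` the cost is `φ (P + h • V)` plus a weighted
integral of `L (q s + h • d s)`, with `P = (x a, x b)`, `V = (η a, η b)`, `q s = (x s, u s, s)`,
`d s = (η s, ν s, 0)`. The Riemann–Liouville integrals `x` and `η` of the bounded controls are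
bounded and measurable, and the weight `(b - s) ^ (β - 1) / Γ β` is integrable, so dominated
convergence lets us differentiate twice under the integral sign: `𝓛` is differentiable near `0`
with `𝓛' 0 = D`, and `𝓛'` is differentiable at `0` with derivative the second variation. L'Hôpital's
rule then gives the limit. The gradient and Hessian-block expressions of the statement are the
partial Fréchet derivatives of `φ` and `L` in the directions `(η, 0)` and `(0, η)`; symmetry of
the second derivative collects the two mixed terms.
-/

open MeasureTheory Set Filter Topology InnerProductSpace
open scoped RealInnerProductSpace Interval

lemma tendsto_sub_sub_mul_div_sq_half {f f' : ℝ → ℝ} {f'' : ℝ}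
    (hf : ∀ᶠ t in 𝓝 0, HasDerivAt f (f' t) t) (hf' : HasDerivAt f' f'' 0) :
    Tendsto (fun h => (f h - f 0 - h * f' 0) / (h ^ 2 / 2)) (𝓝[≠] 0) (𝓝 f'') := by
  have hsq : ∀ t : ℝ, HasDerivAt (fun h : ℝ => h ^ 2 / 2) t t := fun t => by
    simpa using (hasDerivAt_pow 2 t).div_const 2
  refine HasDerivAt.lhopital_zero_nhdsNE (f' := fun t => f' t - f' 0) (g' := id)
    ?_ (Eventually.of_forall hsq) self_mem_nhdsWithin ?_ ?_ ?_
  · filter_upwards [nhdsWithin_le_nhds hf] with t ht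
    exact (ht.sub_const _).sub (hasDerivAt_mul_const _)
  · have hc : ContinuousAt (fun h => f h - f 0 - h * f' 0) 0 :=
      (hf.self_of_nhds.continuousAt.sub continuousAt_const).sub
        (continuousAt_id.mul continuousAt_const)
    simpa using hc.tendsto.mono_left nhdsWithin_le_nhds
  · simpa using ((continuous_pow 2).div_const (2 : ℝ)).tendsto 0 |>.mono_left nhdsWithin_le_nhds
  · refine (hasDerivAt_iff_tendsto_slope.1 hf').congr' ?_
    filter_upwards [self_mem_nhdsWithin] with t ht
    simp [slope_def_field, div_eq_inv_mul]

lemma hasDerivAt_comp_add_smul {F Y : Type*} [NormedAddCommGroup F] [NormedSpace ℝ F]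
    [NormedAddCommGroup Y] [NormedSpace ℝ Y] {H : F → Y} {x v : F} {t : ℝ}
    (hH : DifferentiableAt ℝ H (x + t • v)) :
    HasDerivAt (fun t : ℝ => H (x + t • v)) (fderiv ℝ H (x + t • v) v) t := by
  have hline : HasDerivAt (fun t : ℝ => x + t • v) v t := by
    simpa using ((hasDerivAt_id t).smul_const v).const_add x
  exact hH.hasFDerivAt.comp_hasDerivAt t hline

lemma hasFDerivAt_prodMk_middle {E F G : Type*} [NormedAddCommGroup E] [NormedSpace ℝ E]
    [NormedAddCommGroup F] [NormedSpace ℝ F] [NormedAddCommGroup G] [NormedSpace ℝ G]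
    (e : E) (f : F) (g : G) :
    HasFDerivAt (fun f' => (e, f', g)) ((ContinuousLinearMap.inr ℝ E (F × G)).comp
      (ContinuousLinearMap.inl ℝ F G)) f :=
  (hasFDerivAt_prodMk_right e (f, g)).comp f (hasFDerivAt_prodMk_left f g)

lemma fderiv_fderiv_apply_uncurry {E : Type*} [NormedAddCommGroup E] [NormedSpace ℝ E]
    {G : E → ℝ} (hG : ContDiff ℝ 2 G) (p v d : E) :
    fderiv ℝ (fun pv : E × E => fderiv ℝ G pv.1 pv.2) (p, v) (d, 0)
      = fderiv ℝ (fderiv ℝ G) p d v := by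
  have hG' : Differentiable ℝ (fderiv ℝ G) :=
    (hG.fderiv_right (m := 1) le_rfl).differentiable one_ne_zero
  have h : HasFDerivAt (fun pv : E × E => fderiv ℝ G pv.1 pv.2) _ (p, v) :=
    ((hG' p).hasFDerivAt.comp (p, v) hasFDerivAt_fst).clm_apply hasFDerivAt_snd
  rw [h.fderiv]
  simp

lemma IsSymmSndFDerivAt.fderiv_fderiv_add_add {V : Type*} [NormedAddCommGroup V]
    [NormedSpace ℝ V] {F : V → ℝ} {x : V} (hF : IsSymmSndFDerivAt ℝ F x) (v w : V) :
    fderiv ℝ (fderiv ℝ F) x (v + w) (v + w)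
      = fderiv ℝ (fderiv ℝ F) x v v + 2 * fderiv ℝ (fderiv ℝ F) x w v
        + fderiv ℝ (fderiv ℝ F) x w w := by
  simp only [map_add, add_apply, hF v w]
  ring

section Gradient

variable {E W V : Type*} [NormedAddCommGroup E] [InnerProductSpace ℝ E] [CompleteSpace E]
  [NormedAddCommGroup W] [NormedSpace ℝ W] [NormedAddCommGroup V] [NormedSpace ℝ V]
  {F : V → ℝ}

lemma gradient_comp_eq {e : E → V} {ι : E →L[ℝ] V} {p : E} (he : HasFDerivAt e ι p)
    (hF : DifferentiableAt ℝ F (e p)) :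
    gradient (fun z => F (e z)) p = (toDual ℝ E).symm ((fderiv ℝ F (e p)).comp ι) :=
  congrArg _ (hF.hasFDerivAt.comp p he).fderiv

lemma inner_gradient_comp {e : E → V} {ι : E →L[ℝ] V} {p : E} (he : HasFDerivAt e ι p)
    (hF : DifferentiableAt ℝ F (e p)) (v : E) :
    ⟪gradient (fun z => F (e z)) p, v⟫ = fderiv ℝ F (e p) (ι v) := by
  rw [gradient_comp_eq he hF, toDual_symm_apply, ContinuousLinearMap.comp_apply]

lemma inner_fderiv_toDual_symm_comp {g : W → V} {ρ : W →L[ℝ] V} {q : W}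
    (hF : DifferentiableAt ℝ (fderiv ℝ F) (g q)) (hg : HasFDerivAt g ρ q) (ι : E →L[ℝ] V)
    (v : W) (w : E) :
    ⟪w, fderiv ℝ (fun z => (toDual ℝ E).symm ((fderiv ℝ F (g z)).comp ι)) q v⟫
      = fderiv ℝ (fderiv ℝ F) (g q) (ρ v) (ι w) := by
  have hcomp := ((ContinuousLinearMap.compL ℝ E V ℝ).flip ι).hasFDerivAt.comp q
    (hF.hasFDerivAt.comp q hg)
  have h : HasFDerivAt (fun z => (toDual ℝ E).symm ((fderiv ℝ F (g z)).comp ι)) _ q :=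
    (toDual ℝ E).symm.toContinuousLinearEquiv.hasFDerivAt.comp q hcomp
  rw [h.fderiv, real_inner_comm]
  exact toDual_symm_apply

lemma inner_fderiv_gradient_comp {e : E → V} {ι : E →L[ℝ] V} (hF : ContDiff ℝ 2 F)
    (he : ∀ z, HasFDerivAt e ι z) (p v w : E) :
    ⟪w, fderiv ℝ (fun z => gradient (fun z' => F (e z')) z) p v⟫
      = fderiv ℝ (fderiv ℝ F) (e p) (ι v) (ι w) := by
  have hF' : Differentiable ℝ (fderiv ℝ F) :=
    (hF.fderiv_right (m := 1) le_rfl).differentiable one_ne_zero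
  simp_rw [gradient_comp_eq (he _) (hF.differentiable two_ne_zero _)]
  exact inner_fderiv_toDual_symm_comp (hF' _) (he p) ι v w

lemma inner_fderiv_gradient_comp₂ {e : E → W → V} {ι : E →L[ℝ] V} {ρ : W →L[ℝ] V} {p : E}
    {q : W} (hF : ContDiff ℝ 2 F) (he₁ : ∀ z₂, HasFDerivAt (fun z₁ => e z₁ z₂) ι p)
    (he₂ : HasFDerivAt (e p) ρ q) (v : W) (w : E) :
    ⟪w, fderiv ℝ (fun z₂ => gradient (fun z₁ => F (e z₁ z₂)) p) q v⟫
      = fderiv ℝ (fderiv ℝ F) (e p q) (ρ v) (ι w) := by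
  have hF' : Differentiable ℝ (fderiv ℝ F) :=
    (hF.fderiv_right (m := 1) le_rfl).differentiable one_ne_zero
  simp_rw [gradient_comp_eq (he₁ _) (hF.differentiable two_ne_zero _)]
  exact inner_fderiv_toDual_symm_comp (hF' _) he₂ ι v w

end Gradient

section PartialDerivatives

variable {E E' T : Type*} [NormedAddCommGroup E] [InnerProductSpace ℝ E] [CompleteSpace E]
  [NormedAddCommGroup E'] [InnerProductSpace ℝ E'] [CompleteSpace E']
  [NormedAddCommGroup T] [NormedSpace ℝ T]

lemma inner_gradient_fst_add_inner_gradient_snd {φ : E × E' → ℝ} (hφ : Differentiable ℝ φ)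
    (p₁ : E) (p₂ : E') (v₁ : E) (v₂ : E') :
    ⟪gradient (fun z => φ (z, p₂)) p₁, v₁⟫ + ⟪gradient (fun z => φ (p₁, z)) p₂, v₂⟫
      = fderiv ℝ φ (p₁, p₂) (v₁, v₂) := by
  rw [inner_gradient_comp (hasFDerivAt_prodMk_left _ _) (hφ _),
    inner_gradient_comp (hasFDerivAt_prodMk_right _ _) (hφ _), ← map_add]
  simp

lemma inner_gradient_fst_add_inner_gradient_snd_triple {L : E × E' × T → ℝ}
    (hL : Differentiable ℝ L) (p₁ : E) (p₂ : E') (r : T) (v₁ : E) (v₂ : E') :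
    ⟪gradient (fun z => L (z, p₂, r)) p₁, v₁⟫ + ⟪gradient (fun z => L (p₁, z, r)) p₂, v₂⟫
      = fderiv ℝ L (p₁, p₂, r) (v₁, v₂, 0) := by
  rw [inner_gradient_comp (hasFDerivAt_prodMk_left _ _) (hL _),
    inner_gradient_comp (hasFDerivAt_prodMk_middle _ _ _) (hL _), ← map_add]
  simp

lemma hessian_blocks_eq_fderiv_fderiv {φ : E × E' → ℝ} (hφ : ContDiff ℝ 2 φ)
    (p₁ : E) (p₂ : E') (v₁ : E) (v₂ : E') :
    ⟪v₁, fderiv ℝ (fun z => gradient (fun z' => φ (z', p₂)) z) p₁ v₁⟫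
        + 2 * ⟪v₁, fderiv ℝ (fun z₂ => gradient (fun z₁ => φ (z₁, z₂)) p₁) p₂ v₂⟫
        + ⟪v₂, fderiv ℝ (fun z => gradient (fun z' => φ (p₁, z')) z) p₂ v₂⟫
      = fderiv ℝ (fderiv ℝ φ) (p₁, p₂) (v₁, v₂) (v₁, v₂) := by
  rw [inner_fderiv_gradient_comp hφ (fun z => hasFDerivAt_prodMk_left z _),
    inner_fderiv_gradient_comp₂ hφ (fun z => hasFDerivAt_prodMk_left _ z)
      (hasFDerivAt_prodMk_right _ _),
    inner_fderiv_gradient_comp hφ (fun z => hasFDerivAt_prodMk_right _ z),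
    ← (hφ.contDiffAt.isSymmSndFDerivAt (by simp)).fderiv_fderiv_add_add]
  simp

lemma hessian_blocks_eq_fderiv_fderiv_triple {L : E × E' × T → ℝ} (hL : ContDiff ℝ 2 L)
    (p₁ : E) (p₂ : E') (r : T) (v₁ : E) (v₂ : E') :
    ⟪v₁, fderiv ℝ (fun z => gradient (fun z' => L (z', p₂, r)) z) p₁ v₁⟫
        + 2 * ⟪v₁, fderiv ℝ (fun z₂ => gradient (fun z₁ => L (z₁, z₂, r)) p₁) p₂ v₂⟫
        + ⟪v₂, fderiv ℝ (fun z => gradient (fun z' => L (p₁, z', r)) z) p₂ v₂⟫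
      = fderiv ℝ (fderiv ℝ L) (p₁, p₂, r) (v₁, v₂, 0) (v₁, v₂, 0) := by
  rw [inner_fderiv_gradient_comp hL (fun z => hasFDerivAt_prodMk_left z _),
    inner_fderiv_gradient_comp₂ hL (fun z => hasFDerivAt_prodMk_left _ (z, r))
      (hasFDerivAt_prodMk_middle _ _ _),
    inner_fderiv_gradient_comp hL (fun z => hasFDerivAt_prodMk_middle _ z r),
    ← (hL.contDiffAt.isSymmSndFDerivAt (by simp)).fderiv_fderiv_add_add]
  simp

end PartialDerivatives

section ParametricIntegral

variable {Ω E X : Type*} [MeasurableSpace Ω] {μ : Measure Ω}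
  [NormedAddCommGroup E] [NormedSpace ℝ E] [ProperSpace E] [NormedAddCommGroup X]
  {G : E → ℝ} {w : Ω → ℝ} {q d : Ω → E}

lemma exists_bound_comp_add_smul {H : E → X} (hH : Continuous H) (R T : ℝ) :
    ∃ C, 0 ≤ C ∧ ∀ p v : E, ‖p‖ ≤ R → ‖v‖ ≤ R → ∀ t : ℝ, |t| ≤ T → ‖H (p + t • v)‖ ≤ C := by
  obtain ⟨C, hC⟩ := (isCompact_closedBall (0 : E) (R + T * R)).exists_bound_of_continuousOn
    hH.continuousOn
  refine ⟨max C 0, le_max_right _ _, fun p v hp hv t ht => (hC _ ?_).trans (le_max_left _ _)⟩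
  rw [mem_closedBall_zero_iff]
  calc ‖p + t • v‖ ≤ ‖p‖ + |t| * ‖v‖ := by
        rw [← Real.norm_eq_abs, ← norm_smul]
        exact norm_add_le _ _
    _ ≤ R + T * R := by gcongr; exact (abs_nonneg t).trans ht

lemma hasDerivAt_integral_mul_comp_add_smul (hG : ContDiff ℝ 1 G) (hw : Integrable w μ)
    (hq : AEStronglyMeasurable q μ) (hd : AEStronglyMeasurable d μ)
    (hqb : IsBoundedUnder (· ≤ ·) (ae μ) fun s => ‖q s‖)
    (hdb : IsBoundedUnder (· ≤ ·) (ae μ) fun s => ‖d s‖) (t₀ : ℝ) :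
    HasDerivAt (fun t => ∫ s, w s * G (q s + t • d s) ∂μ)
      (∫ s, w s * fderiv ℝ G (q s + t₀ • d s) (d s) ∂μ) t₀ := by
  obtain ⟨R, hR⟩ := hqb.sup hdb
  have hR' : ∀ᵐ s ∂μ, ‖q s‖ ≤ R ∧ ‖d s‖ ≤ R := by
    filter_upwards [hR] with s hs using max_le_iff.1 hs
  obtain ⟨C₀, -, hC₀⟩ := exists_bound_comp_add_smul hG.continuous R (|t₀| + 1)
  obtain ⟨C₁, hC₁₀, hC₁⟩ := exists_bound_comp_add_smul (hG.continuous_fderiv one_ne_zero) R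
    (|t₀| + 1)
  have hnear : ∀ t ∈ Metric.ball t₀ 1, |t| ≤ |t₀| + 1 := fun t ht => by
    have := abs_sub_abs_le_abs_sub t t₀
    rw [Metric.mem_ball, Real.dist_eq] at ht
    linarith
  have hmeas : ∀ t : ℝ, AEStronglyMeasurable (fun s => q s + t • d s) μ := fun t =>
    hq.add (hd.fun_const_smul t)
  refine (hasDerivAt_integral_of_dominated_loc_of_deriv_le (Metric.ball_mem_nhds t₀ one_pos)
    (F := fun t s => w s * G (q s + t • d s))
    (F' := fun t s => w s * fderiv ℝ G (q s + t • d s) (d s))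
    (bound := fun s => ‖w s‖ * (C₁ * R))
    (Eventually.of_forall fun t => hw.1.mul (hG.continuous.comp_aestronglyMeasurable (hmeas t)))
    ?_ ?_ ?_ (hw.norm.mul_const _) ?_).2
  · refine hw.mul_bdd (hG.continuous.comp_aestronglyMeasurable (hmeas t₀)) (c := C₀) ?_
    filter_upwards [hR'] with s hs
    exact hC₀ _ _ hs.1 hs.2 t₀ (by linarith)
  · exact hw.1.mul (((hG.continuous_fderiv one_ne_zero).fst'.clm_apply
      continuous_snd).comp_aestronglyMeasurable ((hmeas t₀).prodMk hd))
  · filter_upwards [hR'] with s hs t ht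
    rw [norm_mul]
    gcongr
    exact (fderiv ℝ G _).le_of_opNorm_le (hC₁ _ _ hs.1 hs.2 t (hnear t ht)) _ |>.trans
      (by gcongr; exact hs.2)
  · exact ae_of_all _ fun s t _ =>
      (hasDerivAt_comp_add_smul (hG.differentiable one_ne_zero _)).const_mul _

lemma hasDerivAt_integral_mul_fderiv_comp_add_smul (hG : ContDiff ℝ 2 G) (hw : Integrable w μ)
    (hq : AEStronglyMeasurable q μ) (hd : AEStronglyMeasurable d μ)
    (hqb : IsBoundedUnder (· ≤ ·) (ae μ) fun s => ‖q s‖)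
    (hdb : IsBoundedUnder (· ≤ ·) (ae μ) fun s => ‖d s‖) (t₀ : ℝ) :
    HasDerivAt (fun t => ∫ s, w s * fderiv ℝ G (q s + t • d s) (d s) ∂μ)
      (∫ s, w s * fderiv ℝ (fderiv ℝ G) (q s + t₀ • d s) (d s) (d s) ∂μ) t₀ := by
  -- the first-order statement for `(p, v) ↦ fderiv ℝ G p v` along `(q s, d s) + t • (d s, 0)`
  have hG' : ContDiff ℝ 1 (fun pv : E × E => fderiv ℝ G pv.1 pv.2) :=
    ((hG.fderiv_right (m := 1) le_rfl).comp contDiff_fst).clm_apply contDiff_snd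
  have h := hasDerivAt_integral_mul_comp_add_smul hG' hw (hq.prodMk hd)
    (hd.prodMk (aestronglyMeasurable_const (b := (0 : E)))) (by simpa using hqb.sup hdb)
    (by simpa using hdb) t₀
  simpa [fderiv_fderiv_apply_uncurry hG] using h

theorem tendsto_second_variation {F : Type*} [NormedAddCommGroup F] [NormedSpace ℝ F]
    {Φ : F → ℝ} (hΦ : ContDiff ℝ 2 Φ) (hG : ContDiff ℝ 2 G) (hw : Integrable w μ)
    (hq : AEStronglyMeasurable q μ) (hd : AEStronglyMeasurable d μ)
    (hqb : IsBoundedUnder (· ≤ ·) (ae μ) fun s => ‖q s‖)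
    (hdb : IsBoundedUnder (· ≤ ·) (ae μ) fun s => ‖d s‖) (P V : F) {𝓛 : ℝ → ℝ}
    (h𝓛 : ∀ h, 𝓛 h = Φ (P + h • V) + ∫ s, w s * G (q s + h • d s) ∂μ) :
    Tendsto (fun h => (𝓛 h - 𝓛 0
        - h * (fderiv ℝ Φ P V + ∫ s, w s * fderiv ℝ G (q s) (d s) ∂μ)) / (h ^ 2 / 2))
      (𝓝[≠] 0)
      (𝓝 (fderiv ℝ (fderiv ℝ Φ) P V V
        + ∫ s, w s * fderiv ℝ (fderiv ℝ G) (q s) (d s) (d s) ∂μ)) := by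
  have hΦ' : Differentiable ℝ (fderiv ℝ Φ) :=
    (hΦ.fderiv_right (m := 1) le_rfl).differentiable one_ne_zero
  have hderiv : ∀ t, HasDerivAt 𝓛 (fderiv ℝ Φ (P + t • V) V
      + ∫ s, w s * fderiv ℝ G (q s + t • d s) (d s) ∂μ) t := fun t => by
    rw [funext h𝓛]
    exact (hasDerivAt_comp_add_smul (hΦ.differentiable two_ne_zero _)).add
      (hasDerivAt_integral_mul_comp_add_smul (hG.of_le one_le_two) hw hq hd hqb hdb t)
  have hderiv₂ := ((hasDerivAt_comp_add_smul (x := P) (v := V) (hΦ' _)).clm_apply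
    (hasDerivAt_const 0 V)).add (hasDerivAt_integral_mul_fderiv_comp_add_smul hG hw hq hd hqb hdb 0)
  simpa using tendsto_sub_sub_mul_div_sq_half (Eventually.of_forall hderiv) hderiv₂

end ParametricIntegral

noncomputable def riemannLiouville {E : Type*} [NormedAddCommGroup E] [NormedSpace ℝ E]
    (α a : ℝ) (g : ℝ → E) (t : ℝ) : E :=
  ∫ s in a..t, ((t - s) ^ (α - 1) / Real.Gamma α) • g s

lemma intervalIntegrable_sub_rpow {r : ℝ} (hr : -1 < r) (t a b : ℝ) :
    IntervalIntegrable (fun s => (t - s) ^ r) volume a b := by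
  simpa using
    (intervalIntegral.intervalIntegrable_rpow' hr (a := t - a) (b := t - b)).comp_sub_left t

lemma integral_sub_rpow {r : ℝ} (hr : 0 < r) (a t : ℝ) :
    ∫ s in a..t, (t - s) ^ (r - 1) = (t - a) ^ r / r := by
  rw [intervalIntegral.integral_comp_sub_left (fun s => s ^ (r - 1)) t, sub_self,
    integral_rpow (Or.inl (by linarith)), sub_add_cancel, Real.zero_rpow hr.ne', sub_zero]

lemma isBoundedUnder_ae_restrict_Ioc {X : Type*} [NormedAddCommGroup X] {a b M : ℝ} {f : ℝ → X}
    (hf : ∀ᵐ s, s ∈ Icc a b → ‖f s‖ ≤ M) :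
    IsBoundedUnder (· ≤ ·) (ae (volume.restrict (Ioc a b))) fun s => ‖f s‖ :=
  isBoundedUnder_of_eventually_le (a := M) <| by
    filter_upwards [ae_restrict_of_ae hf, ae_restrict_mem measurableSet_Ioc] with s hs hs'
    exact hs (Ioc_subset_Icc_self hs')

section RiemannLiouville

variable {E : Type*} [NormedAddCommGroup E] [NormedSpace ℝ E]

lemma norm_riemannLiouville_le {α a b C t : ℝ} {g : ℝ → E} (hα : 0 < α) (hC : 0 ≤ C)
    (hg : ∀ᵐ s, s ∈ Icc a b → ‖g s‖ ≤ C) (ht : t ∈ Icc a b) :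
    ‖riemannLiouville α a g t‖ ≤ C * (b - a) ^ α / Real.Gamma (α + 1) := by
  have hΓ := Real.Gamma_pos_of_pos hα
  calc ‖riemannLiouville α a g t‖ ≤ ∫ s in a..t, (t - s) ^ (α - 1) / Real.Gamma α * C := by
        refine intervalIntegral.norm_integral_le_of_norm_le ht.1 ?_
          (((intervalIntegrable_sub_rpow (by linarith) t a t).div_const _).mul_const _)
        filter_upwards [hg] with s hs hst
        have hk : 0 ≤ (t - s) ^ (α - 1) / Real.Gamma α :=
          div_nonneg (Real.rpow_nonneg (by linarith [hst.2]) _) hΓ.le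
        rw [norm_smul, Real.norm_of_nonneg hk]
        exact mul_le_mul_of_nonneg_left (hs ⟨hst.1.le, hst.2.trans ht.2⟩) hk
    _ = C * (t - a) ^ α / Real.Gamma (α + 1) := by
        rw [intervalIntegral.integral_mul_const, intervalIntegral.integral_div,
          integral_sub_rpow hα a t, Real.Gamma_add_one hα.ne']
        ring
    _ ≤ C * (b - a) ^ α / Real.Gamma (α + 1) := by
        gcongr
        · linarith [ht.1]
        · exact ht.2

lemma isBoundedUnder_norm_add_riemannLiouville {α a b C : ℝ} {g : ℝ → E} (hα : 0 < α) (y : E)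
    (hg : ∀ᵐ s, s ∈ Icc a b → ‖g s‖ ≤ C) :
    IsBoundedUnder (· ≤ ·) (ae (volume.restrict (Ioc a b)))
      fun t => ‖y + riemannLiouville α a g t‖ :=
  isBoundedUnder_ae_restrict_Ioc <| ae_of_all _ fun _ ht => (norm_add_le _ _).trans <|
    add_le_add le_rfl <| norm_riemannLiouville_le hα (le_max_right C 0)
      (hg.mono fun _ h hs => (h hs).trans (le_max_left _ _)) ht

lemma MeasureTheory.StronglyMeasurable.intervalIntegral_prod_right {f : ℝ → ℝ → E}
    (hf : StronglyMeasurable (Function.uncurry f)) (a : ℝ) :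
    StronglyMeasurable fun t => ∫ s in a..t, f t s := by
  have hpart : ∀ S : Set (ℝ × ℝ), MeasurableSet S →
      StronglyMeasurable fun t => ∫ s, S.indicator (Function.uncurry f) (t, s) :=
    fun S hS => (hf.indicator hS).integral_prod_right'
  have h₁ := hpart {p | p.2 ∈ Ioc a p.1}
    ((_root_.measurableSet_lt measurable_const measurable_snd).inter
      (_root_.measurableSet_le measurable_snd measurable_fst))
  have h₂ := hpart {p | p.2 ∈ Ioc p.1 a}
    ((_root_.measurableSet_lt measurable_fst measurable_snd).inter
      (_root_.measurableSet_le measurable_snd measurable_const))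
  convert h₁.sub h₂ using 2 with t
  rw [intervalIntegral, ← integral_indicator measurableSet_Ioc,
    ← integral_indicator measurableSet_Ioc]
  rfl

lemma stronglyMeasurable_riemannLiouville {α a : ℝ} {g : ℝ → E} (hg : StronglyMeasurable g) :
    StronglyMeasurable (riemannLiouville α a g) :=
  StronglyMeasurable.intervalIntegral_prod_right
    (f := fun t s => ((t - s) ^ (α - 1) / Real.Gamma α) • g s)
    ((((measurable_fst.sub measurable_snd).pow_const _).div_const _).stronglyMeasurable.smul
      (hg.comp_measurable measurable_snd)) a

end RiemannLiouville

theorem stmt_5_general (n : ℕ) (a b : ℝ) (hab : a < b)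
    (α β : ℝ) (hα0 : 0 < α) (hβ : 0 < β)
    (φ : EuclideanSpace ℝ (Fin n) × EuclideanSpace ℝ (Fin n) → ℝ)
    (L : EuclideanSpace ℝ (Fin n) × EuclideanSpace ℝ (Fin n) × ℝ → ℝ)
    (hφ : ContDiff ℝ 2 φ) (hL : ContDiff ℝ 2 L)
    (u ν : ℝ → EuclideanSpace ℝ (Fin n)) (hum : Measurable u) (hνm : Measurable ν)
    (Cu Cν : ℝ)
    (hub : ∀ᵐ s ∂(volume : Measure ℝ), s ∈ Icc a b → ‖u s‖ ≤ Cu)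
    (hνb : ∀ᵐ s ∂(volume : Measure ℝ), s ∈ Icc a b → ‖ν s‖ ≤ Cν)
    (y w : EuclideanSpace ℝ (Fin n)) (x η : ℝ → EuclideanSpace ℝ (Fin n))
    (hx : ∀ t, x t = y + ∫ s in a..t, ((t - s) ^ (α - 1) / Real.Gamma α) • u s)
    (hη : ∀ t, η t = w + ∫ s in a..t, ((t - s) ^ (α - 1) / Real.Gamma α) • ν s)
    (𝓛 : ℝ → ℝ)
    (h𝓛 : ∀ h : ℝ, 𝓛 h = φ (x a + h • η a, x b + h • η b) +
        ∫ s in a..b, ((b - s) ^ (β - 1) / Real.Gamma β) * L (x s + h • η s, u s + h • ν s, s))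
    (D : ℝ)
    (hD : D = ⟪gradient (fun z => φ (z, x b)) (x a), η a⟫
        + ⟪gradient (fun z => φ (x a, z)) (x b), η b⟫
        + ∫ s in a..b, ((b - s) ^ (β - 1) / Real.Gamma β) *
            (⟪gradient (fun z => L (z, u s, s)) (x s), η s⟫
              + ⟪gradient (fun z => L (x s, z, s)) (u s), ν s⟫)) :
    Tendsto (fun h : ℝ => (𝓛 h - 𝓛 0 - h * D) / (h ^ 2 / 2)) (𝓝[≠] (0 : ℝ))
      (𝓝 (⟪η a, (fderiv ℝ (fun z => gradient (fun z' => φ (z', x b)) z) (x a)) (η a)⟫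
        + 2 * ⟪η a, (fderiv ℝ (fun z₂ => gradient (fun z₁ => φ (z₁, z₂)) (x a)) (x b)) (η b)⟫
        + ⟪η b, (fderiv ℝ (fun z => gradient (fun z' => φ (x a, z')) z) (x b)) (η b)⟫
        + ∫ s in a..b, ((b - s) ^ (β - 1) / Real.Gamma β) *
            (⟪η s, (fderiv ℝ (fun z => gradient (fun z' => L (z', u s, s)) z) (x s)) (η s)⟫
              + 2 * ⟪η s, (fderiv ℝ (fun z₂ => gradient (fun z₁ => L (z₁, z₂, s)) (x s)) (u s)) (ν s)⟫
              + ⟪ν s, (fderiv ℝ (fun z => gradient (fun z' => L (x s, z', s)) z) (u s)) (ν s)⟫))) := by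
  have hxm : StronglyMeasurable x := by
    rw [funext hx]
    exact stronglyMeasurable_const.add
      (stronglyMeasurable_riemannLiouville hum.stronglyMeasurable)
  have hηm : StronglyMeasurable η := by
    rw [funext hη]
    exact stronglyMeasurable_const.add
      (stronglyMeasurable_riemannLiouville hνm.stronglyMeasurable)
  have hxb : IsBoundedUnder (· ≤ ·) (ae (volume.restrict (Ioc a b))) fun s => ‖x s‖ := by
    rw [funext hx]
    exact isBoundedUnder_norm_add_riemannLiouville hα0 y hub
  have hηb : IsBoundedUnder (· ≤ ·) (ae (volume.restrict (Ioc a b))) fun s => ‖η s‖ := by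
    rw [funext hη]
    exact isBoundedUnder_norm_add_riemannLiouville hα0 w hνb
  have hsb : IsBoundedUnder (· ≤ ·) (ae (volume.restrict (Ioc a b))) fun s : ℝ => ‖s‖ :=
    isBoundedUnder_ae_restrict_Ioc (ae_of_all _ fun s hs => abs_le_max_abs_abs hs.1 hs.2)
  have key := tendsto_second_variation hφ hL
    ((intervalIntegrable_sub_rpow (r := β - 1) (by linarith) b a b).div_const (Real.Gamma β)).1
    (hxm.aestronglyMeasurable.prodMk (hum.aestronglyMeasurable.prodMk
      measurable_id'.aestronglyMeasurable))
    (hηm.aestronglyMeasurable.prodMk (hνm.aestronglyMeasurable.prodMk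
      (aestronglyMeasurable_const (b := (0 : ℝ)))))
    (hxb.sup ((isBoundedUnder_ae_restrict_Ioc hub).sup hsb))
    (hηb.sup ((isBoundedUnder_ae_restrict_Ioc hνb).sup
      (isBoundedUnder_const (a := ‖(0 : ℝ)‖))))
    (x a, x b) (η a, η b) (𝓛 := 𝓛) fun h => by
      rw [h𝓛, intervalIntegral.integral_of_le hab.le]
      simp only [Prod.smul_mk, Prod.mk_add_mk, smul_zero, add_zero]
  rw [hD, intervalIntegral.integral_of_le hab.le,
    inner_gradient_fst_add_inner_gradient_snd (hφ.differentiable two_ne_zero)]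
  simp_rw [inner_gradient_fst_add_inner_gradient_snd_triple (hL.differentiable two_ne_zero)]
  convert key using 2
  rw [intervalIntegral.integral_of_le hab.le, hessian_blocks_eq_fderiv_fderiv hφ]
  simp_rw [hessian_blocks_eq_fderiv_fderiv_triple hL]

theorem stmt_5 (n : ℕ) (hn : 1 ≤ n) (a b : ℝ) (hab : a < b)
    (α β : ℝ) (hα0 : 0 < α) (hα1 : α ≤ 1) (hβ : 0 < β)
    (φ : EuclideanSpace ℝ (Fin n) × EuclideanSpace ℝ (Fin n) → ℝ)
    (L : EuclideanSpace ℝ (Fin n) × EuclideanSpace ℝ (Fin n) × ℝ → ℝ)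
    (hφ : ContDiff ℝ 2 φ) (hL : ContDiff ℝ 2 L)
    (u ν : ℝ → EuclideanSpace ℝ (Fin n)) (hum : Measurable u) (hνm : Measurable ν)
    (Cu Cν : ℝ)
    (hub : ∀ᵐ s ∂(volume : Measure ℝ), s ∈ Icc a b → ‖u s‖ ≤ Cu)
    (hνb : ∀ᵐ s ∂(volume : Measure ℝ), s ∈ Icc a b → ‖ν s‖ ≤ Cν)
    (y w : EuclideanSpace ℝ (Fin n)) (x η : ℝ → EuclideanSpace ℝ (Fin n))
    (hx : ∀ t, x t = y + ∫ s in a..t, ((t - s) ^ (α - 1) / Real.Gamma α) • u s)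
    (hη : ∀ t, η t = w + ∫ s in a..t, ((t - s) ^ (α - 1) / Real.Gamma α) • ν s)
    (𝓛 : ℝ → ℝ)
    (h𝓛 : ∀ h : ℝ, 𝓛 h = φ (x a + h • η a, x b + h • η b) +
        ∫ s in a..b, ((b - s) ^ (β - 1) / Real.Gamma β) * L (x s + h • η s, u s + h • ν s, s))
    (D : ℝ)
    (hD : D = ⟪gradient (fun z => φ (z, x b)) (x a), η a⟫
        + ⟪gradient (fun z => φ (x a, z)) (x b), η b⟫
        + ∫ s in a..b, ((b - s) ^ (β - 1) / Real.Gamma β) *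
            (⟪gradient (fun z => L (z, u s, s)) (x s), η s⟫
              + ⟪gradient (fun z => L (x s, z, s)) (u s), ν s⟫)) :
    Tendsto (fun h : ℝ => (𝓛 h - 𝓛 0 - h * D) / (h ^ 2 / 2)) (𝓝[≠] (0 : ℝ))
      (𝓝 (⟪η a, (fderiv ℝ (fun z => gradient (fun z' => φ (z', x b)) z) (x a)) (η a)⟫
        + 2 * ⟪η a, (fderiv ℝ (fun z₂ => gradient (fun z₁ => φ (z₁, z₂)) (x a)) (x b)) (η b)⟫
        + ⟪η b, (fderiv ℝ (fun z => gradient (fun z' => φ (x a, z')) z) (x b)) (η b)⟫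
        + ∫ s in a..b, ((b - s) ^ (β - 1) / Real.Gamma β) *
            (⟪η s, (fderiv ℝ (fun z => gradient (fun z' => L (z', u s, s)) z) (x s)) (η s)⟫
              + 2 * ⟪η s, (fderiv ℝ (fun z₂ => gradient (fun z₁ => L (z₁, z₂, s)) (x s)) (u s)) (ν s)⟫
              + ⟪ν s, (fderiv ℝ (fun z => gradient (fun z' => L (x s, z', s)) z) (u s)) (ν s)⟫))) :=
  stmt_5_general n a b hab α β hα0 hβ φ L hφ hL u ν hum hνm Cu Cν hub hνb y w x η hx hη 𝓛 h𝓛 D hD
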